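/- arXiv:math/0612683 — 5 statements merged into one kernel-verified Lean document; each statement's English description precedes it below -/
import Mathlib

section
/- Let p be a prime and work in the polynomial ring (ZMod p)[X]. For every natural number N and every n ≥ 1, the n-th Hasse derivative of the polynomial ∑_{l ∈ Finset.range N} X^(p^(p^l)) equals the constant polynomial 1 if there exists l < N with n = p^(p^l), and equals 0 otherwise. -/
open Polynomial

theorem hasseDeriv_sum_pow_prime_tower (p : ℕ) (hp : p.Prime) (N n : ℕ) (hn : 1 ≤ n) :
    Polynomial.hasseDeriv n
      (∑ l ∈ Finset.range N, (Polynomial.X : Polynomial (ZMod p)) ^ (p ^ (p ^ l))) =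
      if ∃ l < N, n = p ^ (p ^ l) then 1 else 0 := by
  have hinj : ∀ a b : ℕ, p ^ (p ^ a) = p ^ (p ^ b) → a = b := by
    intro a b h
    exact Nat.pow_right_injective hp.two_le
      (Nat.pow_right_injective hp.two_le h)
  have hterm : ∀ l : ℕ,
      Polynomial.hasseDeriv n ((Polynomial.X : Polynomial (ZMod p)) ^ (p ^ (p ^ l))) =
      if n = p ^ (p ^ l) then 1 else 0 := by
    intro l
    rw [← monomial_one_right_eq_X_pow, hasseDeriv_monomial]
    split_ifs with h
    · subst h; simp
    · have : (p : ℕ) ∣ (p ^ (p ^ l)).choose n :=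
        hp.dvd_choose_pow (by omega) h
      rw [mul_one]
      have : ((p ^ (p ^ l)).choose n : ZMod p) = 0 := by
        exact_mod_cast (ZMod.natCast_eq_zero_iff _ _).mpr this
      rw [this, monomial_zero_right]
  rw [map_sum]
  simp_rw [hterm]
  split_ifs with h
  · obtain ⟨l, hl, rfl⟩ := h
    rw [Finset.sum_eq_single l]
    · simp
    · intro b _ hb
      rw [if_neg fun hc => hb (hinj _ _ hc.symm)]
    · intro hl'; exact absurd (Finset.mem_range.mpr hl) hl'
  · apply Finset.sum_eq_zero
    intro l hl
    rw [if_neg fun hc => h ⟨l, Finset.mem_range.mp hl, hc⟩]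
end

section
/- Let p be a prime, let k be the algebraic closure of the field with p elements, and let f ∈ k[[z]] be the formal power series f = ∑_{l=0}^∞ z^(p^(p^l)) (i.e., the power series whose m-th coefficient is 1 if m = p^(p^l) for some l ≥ 0 and 0 otherwise). Then the two elements z and f of k[[z]] are algebraically independent over k; equivalently, f is transcendental over the rational function field K = k(z). -/
/-!
In characteristic `p` the Frobenius turns `f = ∑ₗ z ^ p ^ p ^ l` into
`f ^ p ^ i = ∑ₗ z ^ p ^ (p ^ l + i)`.
If `f` were algebraic over `k[z]`, some multiple `y • f` with `0 ≠ y ∈ k[z]` would be integral, so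
its powers would lie in a finitely generated `k[z]`-module; hence the series `y ^ p ^ i • f ^ p ^ i`
would be linearly dependent over `k[z]`. They are not: given a relation `∑ gᵢ • f ^ p ^ i = 0`,
the exponents `p ^ (p ^ L + i)` are so sparse for large `L` that the coefficient of
`z ^ (deg g_{i₀} + p ^ (p ^ L + i₀))` in the relation is the leading coefficient of `g_{i₀}` alone.
-/

open scoped Polynomial PowerSeries

theorem Nat.two_mul_pow_le_pow_of_lt {p a b : ℕ} (hp : 2 ≤ p) (h : a < b) : 2 * p ^ a ≤ p ^ b :=
  calc 2 * p ^ a ≤ p * p ^ a := Nat.mul_le_mul_right _ hp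
    _ = p ^ (a + 1) := (Nat.pow_succ' ..).symm
    _ ≤ p ^ b := Nat.pow_le_pow_right (by omega) h

theorem Nat.eq_of_add_pow_eq_add_pow {p a b u v H : ℕ} (hp : 2 ≤ p) (hu : u ≤ H) (hv : v ≤ H)
    (hH : 2 * H < p ^ b) (h : u + p ^ a = v + p ^ b) : a = b := by
  rcases lt_trichotomy a b with hab | hab | hab
  · have := Nat.two_mul_pow_le_pow_of_lt hp hab
    omega
  · exact hab
  · have := Nat.two_mul_pow_le_pow_of_lt hp hab
    omega

theorem Nat.eq_and_eq_of_add_pow_pow_add_eq {p N H L i i₀ u j b : ℕ} (hp : 2 ≤ p) (hi : i ≤ N)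
    (hi₀ : i₀ ≤ N) (hu : u ≤ H) (hj : j ≤ H) (hL : 2 * (N + H) < p ^ L)
    (h : u + p ^ (p ^ b + i) = j + p ^ (p ^ L + i₀)) : u = j ∧ i = i₀ := by
  have hLpow : p ^ L ≤ p ^ (p ^ L + i₀) :=
    Nat.pow_le_pow_right (by omega) ((Nat.lt_pow_self (by omega)).le.trans (Nat.le_add_right _ _))
  have hexp := Nat.eq_of_add_pow_eq_add_pow hp hu hj (by omega) h
  obtain rfl : b = L :=
    Nat.eq_of_add_pow_eq_add_pow hp hi hi₀ (by omega) (by omega : i + p ^ b = i₀ + p ^ L)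
  obtain rfl : i = i₀ := by omega
  omega

theorem LinearIndependent.smul_of_ne_zero {R ι M : Type*} [Ring R] [NoZeroDivisors R]
    [AddCommGroup M] [Module R M] {v : ι → M} (hv : LinearIndependent R v) {c : ι → R}
    (hc : ∀ i, c i ≠ 0) : LinearIndependent R (c • v) := by
  rw [linearIndependent_iff'] at hv ⊢
  intro s g hg i hi
  have := hv s (g * c) (by simpa [mul_smul] using hg) i hi
  exact (mul_eq_zero.mp this).resolve_right (hc i)

section CommRing

variable {R : Type*} [CommRing R]

theorem IsIntegral.not_linearIndependent_pow {A : Type*} [Ring A] [Algebra R A]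
    [StrongRankCondition R] {x : A} (hx : IsIntegral R x) (e : ℕ → ℕ) :
    ¬LinearIndependent R fun i ↦ x ^ e i := by
  intro hli
  obtain ⟨w, hw⟩ := hx.fg_adjoin_singleton
  have : Finite ℕ := hli.finite_of_le_span_finite _ (w : Set A) <| by
    rintro _ ⟨i, rfl⟩
    rw [hw]
    exact Subalgebra.pow_mem _ (Algebra.self_mem_adjoin_singleton R x) _
  exact not_finite ℕ

theorem PowerSeries.map_iterateFrobenius_expand (p : ℕ) [ExpChar R p] (φ : R⟦X⟧) (n : ℕ) :
    map (iterateFrobenius R p n) (expand (p ^ n) (pow_ne_zero n (expChar_ne_zero R p)) φ) =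
      φ ^ p ^ n :=
  MvPowerSeries.map_iterateFrobenius_expand p (expChar_ne_zero R p) φ n

theorem PowerSeries.algebraicIndependent_X_of_transcendental [Nontrivial R] {φ : R⟦X⟧}
    (hφ : Transcendental R[X] φ) : AlgebraicIndependent R ![PowerSeries.X, φ] := by
  have hX : AlgebraicIndependent R fun _ : Unit ↦ (Polynomial.X : R[X]) :=
    algebraicIndependent_unique_type_iff.mpr (Polynomial.transcendental_X R)
  have hφ' : AlgebraicIndependent R[X] fun _ : Unit ↦ φ :=
    algebraicIndependent_unique_type_iff.mpr hφ
  convert (hX.sumElim_comp hφ').comp ![Sum.inr (), Sum.inl ()] (by decide) using 1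
  ext i
  fin_cases i <;> simp [PowerSeries.algebraMap_apply']

end CommRing

open scoped Classical in
noncomputable def powTowerSeries (R : Type*) [Semiring R] (p i : ℕ) : R⟦X⟧ :=
  PowerSeries.mk fun m ↦ if ∃ l, m = p ^ (p ^ l + i) then 1 else 0

section PowTowerSeries

open PowerSeries

open scoped Classical in
theorem coeff_powTowerSeries {R : Type*} [Semiring R] (p i m : ℕ) :
    coeff m (powTowerSeries R p i) = if ∃ l, m = p ^ (p ^ l + i) then 1 else 0 :=
  coeff_mk _ _

theorem coeff_coe_mul_powTowerSeries {R : Type*} [Semiring R] {p : ℕ} (hp : 2 ≤ p) {c : R[X]}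
    {N H L i i₀ j : ℕ} (hc : c.natDegree ≤ H) (hi : i ≤ N) (hi₀ : i₀ ≤ N) (hj : j ≤ H)
    (hL : 2 * (N + H) < p ^ L) :
    coeff (j + p ^ (p ^ L + i₀)) ((c : R⟦X⟧) * powTowerSeries R p i) =
      if i = i₀ then c.coeff j else 0 := by
  rw [coeff_mul, Finset.sum_eq_single (j, p ^ (p ^ L + i₀))]
  · simp only [Polynomial.coeff_coe, coeff_powTowerSeries]
    by_cases hii : i = i₀
    · rw [if_pos ⟨L, hii ▸ rfl⟩, mul_one, if_pos hii]
    · rw [if_neg hii, if_neg, mul_zero]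
      rintro ⟨b, hb⟩
      exact hii (Nat.eq_and_eq_of_add_pow_pow_add_eq (b := b) (L := L) hp hi hi₀
        (Nat.zero_le H) (Nat.zero_le H) hL (by omega)).2
  · rintro ⟨u, v⟩ huv hne
    rw [Finset.HasAntidiagonal.mem_antidiagonal] at huv
    simp only [Polynomial.coeff_coe, coeff_powTowerSeries]
    split_ifs with hv
    · obtain ⟨b, rfl⟩ := hv
      rw [mul_one]
      by_contra hcu
      have hu : u ≤ H := (Polynomial.le_natDegree_of_ne_zero hcu).trans hc
      obtain ⟨rfl, rfl⟩ := Nat.eq_and_eq_of_add_pow_pow_add_eq hp hi hi₀ hu hj hL huv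
      exact hne (Prod.ext rfl (by omega))
    · rw [mul_zero]
  · exact fun h ↦ (h (by simp)).elim

variable {R : Type*} [CommRing R] {p : ℕ}

theorem powTowerSeries_pow_prime_pow [ExpChar R p] (i n : ℕ) :
    powTowerSeries R p i ^ p ^ n = powTowerSeries R p (i + n) := by
  have hp : 0 < p ^ n := pos_of_ne_zero (pow_ne_zero n (expChar_ne_zero R p))
  rw [← map_iterateFrobenius_expand]
  ext m
  rw [coeff_map, coeff_expand, coeff_powTowerSeries, coeff_powTowerSeries]
  by_cases hdvd : p ^ n ∣ m
  · obtain ⟨q, rfl⟩ := hdvd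
    have hiff : (∃ l, q = p ^ (p ^ l + i)) ↔ ∃ l, p ^ n * q = p ^ (p ^ l + (i + n)) := by
      simp only [← add_assoc, pow_add _ _ n, mul_comm _ (p ^ n), Nat.mul_right_inj hp.ne']
    rw [if_pos (dvd_mul_right _ _), Nat.mul_div_cancel_left q hp]
    by_cases h : ∃ l, q = p ^ (p ^ l + i)
    · rw [if_pos h, if_pos (hiff.mp h), map_one]
    · rw [if_neg h, if_neg (mt hiff.mpr h), map_zero]
  · rw [if_neg hdvd, map_zero, if_neg]
    rintro ⟨l, rfl⟩
    exact hdvd (pow_dvd_pow p (by omega))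

theorem linearIndependent_powTowerSeries (hp : 2 ≤ p) :
    LinearIndependent R[X] (powTowerSeries R p) := by
  rw [linearIndependent_iff']
  intro s g hg i₀ hi₀
  set N := s.sup id
  set H := s.sup fun i ↦ (g i).natDegree
  have hN : ∀ i ∈ s, i ≤ N := fun i hi ↦ Finset.le_sup (f := id) hi
  have hH : ∀ i ∈ s, (g i).natDegree ≤ H := fun i hi ↦
    Finset.le_sup (f := fun i ↦ (g i).natDegree) hi
  have hL : 2 * (N + H) < p ^ (2 * (N + H)) := Nat.lt_pow_self (by omega)
  set n := (g i₀).natDegree + p ^ (p ^ (2 * (N + H)) + i₀)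
  have hterm : ∀ i ∈ s, coeff n ((g i : R⟦X⟧) * powTowerSeries R p i) =
      if i = i₀ then (g i).coeff (g i₀).natDegree else 0 := fun i hi ↦
    coeff_coe_mul_powTowerSeries hp (hH i hi) (hN i hi) (hN i₀ hi₀) (hH i₀ hi₀) hL
  have hcoeff := congrArg (coeff n) hg
  simp only [map_sum, map_zero, Algebra.smul_def, algebraMap_apply', Algebra.algebraMap_self,
    map_id, id_eq] at hcoeff
  rw [Finset.sum_congr rfl hterm, Finset.sum_ite_eq', if_pos hi₀] at hcoeff
  exact Polynomial.leadingCoeff_eq_zero.mp hcoeff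

theorem transcendental_powTowerSeries [IsDomain R] [hp : Fact p.Prime] [CharP R p] :
    Transcendental R[X] (powTowerSeries R p 0) := by
  intro halg
  obtain ⟨y, hy, hint⟩ := halg.exists_integral_multiple
  have hli := (linearIndependent_powTowerSeries (R := R) hp.out.two_le).smul_of_ne_zero
    (c := fun i ↦ y ^ p ^ i) fun i ↦ pow_ne_zero _ hy
  have hpow : (fun i ↦ y ^ p ^ i) • powTowerSeries R p =
      fun i ↦ (y • powTowerSeries R p 0) ^ p ^ i := by
    ext1 i
    rw [Pi.smul_apply', smul_pow, powTowerSeries_pow_prime_pow, zero_add]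
  exact hint.not_linearIndependent_pow (p ^ ·) (hpow ▸ hli)

end PowTowerSeries

open PowerSeries Classical in
theorem transcendental_sum_pow_prime_tower (p : ℕ) (hp : Fact p.Prime)
    (f : PowerSeries (AlgebraicClosure (ZMod p)))
    (hf : ∀ m : ℕ, PowerSeries.coeff m f =
      if ∃ l : ℕ, m = p ^ (p ^ l) then 1 else 0) :
    AlgebraicIndependent (AlgebraicClosure (ZMod p))
      ![(PowerSeries.X : PowerSeries (AlgebraicClosure (ZMod p))), f] := by
  obtain rfl : f = powTowerSeries _ p 0 := by
    ext m
    simp only [hf, coeff_powTowerSeries, add_zero]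
  exact PowerSeries.algebraicIndependent_X_of_transcendental transcendental_powTowerSeries
end

section
/- Let p be a prime, K a field of characteristic p, L = K(X) the rational function field over K, and F = K(X^p) the intermediate field generated over K by X^p. Then for every set S of K-algebra automorphisms of L, the fixed field {x ∈ L : σ(x) = x for all σ ∈ S} is not equal to F. (Indeed, any K-automorphism of L fixing X^p fixes X, hence is the identity, so if every σ ∈ S fixes F pointwise the fixed field is all of L, which properly contains F.) -/
/-!
Since `K⟮X^n⟯ ⊆ K(X)` has degree `n` (the larger of the degrees of numerator and denominator of
`X^n`), `X` lies in `K⟮X^n⟯` only for `n = 1`. On the other hand, in characteristic `p` the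
Frobenius map is injective, so an automorphism fixing `X^p` fixes `X`: a fixed field containing
`X^p` contains `X`, and hence is never `K⟮X^p⟯`.
-/

open IntermediateField

namespace RatFunc

variable {K : Type*} [Field K]

theorem finrank_adjoin_X_pow (n : ℕ) :
    Module.finrank K⟮(X : RatFunc K) ^ n⟯ (RatFunc K) = n := by
  rw [finrank_eq_max_natDegree, ← algebraMap_X, ← map_pow, num_algebraMap, denom_algebraMap]
  simp

theorem X_mem_adjoin_X_pow_iff {n : ℕ} : (X : RatFunc K) ∈ K⟮(X : RatFunc K) ^ n⟯ ↔ n = 1 := by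
  refine ⟨fun hX => ?_, by rintro rfl; simp [mem_adjoin_simple_self]⟩
  have htop : K⟮(X : RatFunc K) ^ n⟯ = ⊤ :=
    top_le_iff.mp (adjoin_X (K := K) ▸ adjoin_simple_le_iff.mpr hX)
  rw [← finrank_adjoin_X_pow (K := K) n, htop, IntermediateField.finrank_top]

end RatFunc

theorem map_eq_self_of_map_pow_eq_self {R F : Type*} [CommRing R] [IsReduced R] (p : ℕ)
    [ExpChar R p] [FunLike F R R] [RingHomClass F R R] (σ : F) {x : R}
    (h : σ (x ^ p) = x ^ p) : σ x = x :=
  frobenius_inj R p (by rwa [map_pow] at h)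

theorem adjoin_X_pow_p_not_fixed_field (p : ℕ) (hp : p.Prime)
    (K : Type*) [Field K] [CharP K p]
    (S : Set (RatFunc K ≃ₐ[K] RatFunc K)) :
    {x : RatFunc K | ∀ σ ∈ S, σ x = x} ≠
      (IntermediateField.adjoin K {(RatFunc.X : RatFunc K) ^ p} :
        IntermediateField K (RatFunc K)) := by
  have := Fact.mk hp
  intro hfix
  have hXp : RatFunc.X ^ p ∈ {x : RatFunc K | ∀ σ ∈ S, σ x = x} :=
    hfix ▸ mem_adjoin_simple_self K _
  have hX : RatFunc.X ∈ {x : RatFunc K | ∀ σ ∈ S, σ x = x} :=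
    fun σ hσ => map_eq_self_of_map_pow_eq_self p σ (hXp σ hσ)
  rw [hfix, SetLike.mem_coe, RatFunc.X_mem_adjoin_X_pow_iff] at hX
  exact hp.one_lt.ne' hX
end

section
/- Let p be a prime and K a field of characteristic p. For a polynomial g ∈ K[X], consider the polynomial ring K[X][Y] and the element g(X+Y) obtained by substituting X+Y into g. Then g(X+Y) − g(X) lies in the ideal of K[X][Y] generated by Y^p if and only if g is a polynomial in X^p, i.e., g lies in the image of the substitution map h(X) ↦ h(X^p) (Mathlib's Polynomial.expand K p). -/
/-!
Expanding `g(X + Y)` in powers of `Y` (Taylor's formula), the coefficient of `Y` is `g'(X)`, so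
`Y ^ p ∣ g(X + Y) - g(X)` forces `g' = 0`, and in characteristic `p` a polynomial with vanishing
derivative is a polynomial in `X ^ p`. Conversely, if `g = h(X ^ p)` then by Frobenius
`g(X + Y) = h(X ^ p + Y ^ p)`, and `a - b ∣ h(a) - h(b)` with `a - b = Y ^ p`.
-/

open Polynomial

namespace Polynomial
variable {R : Type*} [CommRing R]

theorem sub_dvd_aeval_sub {A : Type*} [CommRing A] [Algebra R A] (a b : A) (f : R[X]) :
    a - b ∣ aeval a f - aeval b f := by
  simpa only [aeval_def, eval₂_eq_eval_map] using sub_dvd_eval_sub a b (f.map (algebraMap R A))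

theorem aeval_C_X_add_X_eq_taylor (g : R[X]) :
    aeval (C X + X : R[X][X]) g = taylor X (g.map C) := by
  rw [taylor_apply, comp, eval₂_map, aeval_def,
    IsScalarTower.algebraMap_eq R R[X] R[X][X], Polynomial.algebraMap_eq, add_comm]
  rfl

theorem coeff_aeval_C_X_add_X_one (g : R[X]) :
    (aeval (C X + X : R[X][X]) g).coeff 1 = derivative g := by
  rw [aeval_C_X_add_X_eq_taylor, taylor_coeff_one, derivative_map, eval_map, eval₂_C_X]

theorem derivative_eq_zero_of_X_pow_dvd_aeval_C_X_add_X_sub_C {n : ℕ} (hn : 1 < n) {g : R[X]}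
    (h : X ^ n ∣ aeval (C X + X : R[X][X]) g - C g) : derivative g = 0 := by
  simpa only [coeff_sub, coeff_aeval_C_X_add_X_one, coeff_C, one_ne_zero, if_false, sub_zero]
    using (X_pow_dvd_iff.mp h) 1 hn

theorem C_eq_aeval_C_X (f : R[X]) : (C f : R[X][X]) = aeval (C X) f := by
  conv_lhs => rw [← aeval_X_left_apply f]
  exact (aeval_algHom_apply (CAlgHom : R[X] →ₐ[R] R[X][X]) X f).symm

theorem X_pow_dvd_aeval_C_X_add_X_sub_C_expand (p : ℕ) [ExpChar R p] (h : R[X]) :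
    X ^ p ∣ aeval (C X + X : R[X][X]) (expand R p h) - C (expand R p h) := by
  rw [C_eq_aeval_C_X (expand R p h), expand_aeval, expand_aeval, add_pow_expChar]
  have hdvd := sub_dvd_aeval_sub (C X ^ p + X ^ p : R[X][X]) (C X ^ p) h
  rwa [add_sub_cancel_left] at hdvd

end Polynomial

theorem sub_mem_span_Y_pow_p_iff_expand (p : ℕ) (hp : p.Prime)
    (K : Type*) [Field K] [CharP K p] (g : Polynomial K) :
    (Polynomial.aeval (Polynomial.C Polynomial.X + Polynomial.X :
        Polynomial (Polynomial K)) g - Polynomial.C g ∈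
      Ideal.span {(Polynomial.X : Polynomial (Polynomial K)) ^ p}) ↔
    g ∈ Set.range (Polynomial.expand K p) := by
  have : Fact p.Prime := ⟨hp⟩
  rw [Ideal.mem_span_singleton]
  constructor
  · intro h
    exact ⟨contract p g, expand_contract p
      (derivative_eq_zero_of_X_pow_dvd_aeval_C_X_add_X_sub_C hp.one_lt h) hp.ne_zero⟩
  · rintro ⟨h, rfl⟩
    exact X_pow_dvd_aeval_C_X_add_X_sub_C_expand p h
end

section
/- Let p be a prime, K a field of characteristic p, and φ = ∑_{i=0}^{n} a_i X^(p^i) ∈ K[X] a nonzero additive polynomial. Let L = K(X) be the rational function field and let F be the intermediate field of L/K generated over K by the element φ(X). Then L is a separable extension of F if and only if a_0 ≠ 0. -/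
/-!
The derivative of `φ` is the constant `a 0`. If `a 0 ≠ 0`, then `φ - φ(X)` has coefficients in
`F`, vanishes at `X` and has a unit derivative, so `X` is separable over `F`; and `X` generates
`K(X)` over `F`. If `a 0 = 0`, then `φ(X) ∈ K(X^p)`, so separability of `K(X)/F` would make `X`
separable over `K(X^p)`; since `X^p ∈ K(X^p)` this forces `X ∈ K(X^p)`, contradicting
`[K(X) : K(X^p)] = p`.
-/

open Polynomial IntermediateField

theorem Polynomial.derivative_sum_C_mul_X_pow_pow {R : Type*} [Semiring R] (p : ℕ) [CharP R p]
    (n : ℕ) (a : ℕ → R) :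
    derivative (∑ i ∈ Finset.range (n + 1), C (a i) * X ^ p ^ i) = C (a 0) := by
  rw [derivative_sum, Finset.sum_range_succ', Finset.sum_eq_zero]
  · simp
  · intro i _
    simp [derivative_X_pow, pow_succ]

theorem Polynomial.separable_of_derivative_eq_C {R : Type*} [CommRing R] {f : R[X]} {c : R}
    (hc : IsUnit c) (hf : derivative f = C c) : f.Separable := by
  rw [Polynomial.Separable, hf]
  exact isCoprime_one_right.of_isCoprime_of_dvd_right (isUnit_C.mpr hc).dvd

theorem IntermediateField.isSeparable_of_derivative_eq_C {K L : Type*} [Field K] [Field L]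
    [Algebra K L] (E : IntermediateField K L) {f : K[X]} {c : K} (hc : c ≠ 0)
    (hf : derivative f = C c) {x : L} (hx : aeval x f ∈ E) : IsSeparable E x := by
  set q : E[X] := f.map (algebraMap K E) - C ⟨aeval x f, hx⟩
  have hq : aeval x q = 0 := by simp [q]
  have hq' : derivative q = C (algebraMap K E c) := by
    simp [q, derivative_map, hf]
  exact (separable_of_derivative_eq_C (by simpa using hc) hq').of_dvd (minpoly.dvd E x hq)

theorem mem_range_of_isSeparable_of_pow_mem {F E : Type*} [Field F] [Field E] [Algebra F E]
    (q : ℕ) [ExpChar F q] {x : E} (hx : IsSeparable F x)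
    (hxq : x ^ q ∈ (algebraMap F E).range) :
    x ∈ (algebraMap F E).range :=
  adjoin_simple_eq_bot_iff.mp <|
    (adjoin_simple_eq_adjoin_pow_expChar_of_isSeparable F E hx q).trans
      (adjoin_simple_eq_bot_iff.mpr hxq)

theorem RatFunc.finrank_adjoin_X_pow_s13 (K : Type*) [Field K] (m : ℕ) :
    Module.finrank K⟮(RatFunc.X : RatFunc K) ^ m⟯ (RatFunc K) = m := by
  rw [RatFunc.finrank_eq_max_natDegree, ← RatFunc.algebraMap_X, ← map_pow,
    RatFunc.num_algebraMap, RatFunc.denom_algebraMap]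
  simp

theorem RatFunc.X_notMem_adjoin_X_pow (K : Type*) [Field K] {m : ℕ} (hm : m ≠ 1) :
    (RatFunc.X : RatFunc K) ∉ K⟮(RatFunc.X : RatFunc K) ^ m⟯ := by
  intro hX
  have htop : K⟮(RatFunc.X : RatFunc K) ^ m⟯ = ⊤ :=
    top_le_iff.mp (RatFunc.adjoin_X.symm.le.trans (adjoin_simple_le_iff.mpr hX))
  have := RatFunc.finrank_adjoin_X_pow_s13 K m
  rw [htop, IntermediateField.finrank_top] at this
  exact hm this.symm

theorem RatFunc.isSeparable_iff_isSeparable_X {K : Type*} [Field K]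
    (E : IntermediateField K (RatFunc K)) :
    Algebra.IsSeparable E (RatFunc K) ↔ IsSeparable E (RatFunc.X : RatFunc K) := by
  rw [← isSeparable_adjoin_simple_iff_isSeparable]
  exact (AlgEquiv.Algebra.isSeparable_iff (RatFunc.IntermediateField.adjoinXEquiv E)).symm

theorem aeval_sum_C_mul_X_pow_pow_mem_adjoin_pow {K L : Type*} [Field K] [Field L]
    [Algebra K L] (p n : ℕ) (a : ℕ → K) (ha : a 0 = 0) (x : L) :
    aeval x (∑ i ∈ Finset.range (n + 1), C (a i) * X ^ p ^ i) ∈ K⟮x ^ p⟯ := by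
  rw [Finset.sum_range_succ', ha, C_0, zero_mul, add_zero, map_sum]
  refine sum_mem fun i _ => ?_
  rw [map_mul, aeval_C, map_pow, aeval_X, pow_succ', pow_mul]
  exact mul_mem (IntermediateField.algebraMap_mem _ _) (pow_mem (mem_adjoin_simple_self K _) _)

theorem separable_ratFunc_adjoin_additive_poly_iff_general (p : ℕ) (hp : p.Prime)
    (K : Type*) [Field K] [CharP K p] (n : ℕ) (a : ℕ → K)
    (φ : Polynomial K)
    (hφdef : φ = ∑ i ∈ Finset.range (n + 1), Polynomial.C (a i) * Polynomial.X ^ p ^ i) :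
    letI F : IntermediateField K (RatFunc K) :=
      IntermediateField.adjoin K {Polynomial.aeval (RatFunc.X : RatFunc K) φ}
    Algebra.IsSeparable F (RatFunc K) ↔ a 0 ≠ 0 := by
  subst hφdef
  set F :=
    K⟮aeval (RatFunc.X : RatFunc K) (∑ i ∈ Finset.range (n + 1), C (a i) * X ^ p ^ i)⟯
  have : Fact p.Prime := ⟨hp⟩
  constructor
  · intro _ ha0
    have hFE : F ≤ K⟮(RatFunc.X : RatFunc K) ^ p⟯ :=
      adjoin_simple_le_iff.mpr (aeval_sum_C_mul_X_pow_pow_mem_adjoin_pow p n a ha0 _)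
    let E := extendScalars hFE
    have : Algebra.IsSeparable E (RatFunc K) :=
      Algebra.isSeparable_tower_top_of_isSeparable F E _
    have hX : RatFunc.X ∈ (algebraMap E (RatFunc K)).range :=
      mem_range_of_isSeparable_of_pow_mem p (Algebra.IsSeparable.isSeparable E _)
        ⟨⟨_, mem_adjoin_simple_self K _⟩, rfl⟩
    exact RatFunc.X_notMem_adjoin_X_pow K hp.ne_one (by simpa [E] using hX)
  · intro ha0
    rw [RatFunc.isSeparable_iff_isSeparable_X]
    exact isSeparable_of_derivative_eq_C F ha0 (derivative_sum_C_mul_X_pow_pow p n a)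
      (mem_adjoin_simple_self K _)

theorem separable_ratFunc_adjoin_additive_poly_iff (p : ℕ) (hp : p.Prime)
    (K : Type*) [Field K] [CharP K p] (n : ℕ) (a : ℕ → K)
    (φ : Polynomial K)
    (hφdef : φ = ∑ i ∈ Finset.range (n + 1), Polynomial.C (a i) * Polynomial.X ^ p ^ i)
    (hφ : φ ≠ 0) :
    letI F : IntermediateField K (RatFunc K) :=
      IntermediateField.adjoin K {Polynomial.aeval (RatFunc.X : RatFunc K) φ}
    Algebra.IsSeparable F (RatFunc K) ↔ a 0 ≠ 0 :=
  separable_ratFunc_adjoin_additive_poly_iff_general p hp K n a φ hφdef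
end
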